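/- With the same setting, if $F$ is five times continuously differentiable with bounded derivatives near $u$, the fourth-order difference $\frac{1}{12P\varepsilon}\big(-\Psi(2P,u) + 8\Psi(P,u) - 8\Psi(-P,u) + \Psi(-2P,u)\big)$ equals $F(u) + O(\varepsilon^4)$ as $\varepsilon \to 0$. -/

import Mathlib

/-!
Write `g t = Ψ ε t u`, so that `g' = ε F(g)` on `[-2P, 2P]`. For small `ε` the curve `g` cannot
leave the unit ball around `u`, where the derivatives of `F` are bounded by `M`; differentiating the
equation and using the Faà di Bruno bound then gives `‖g⁽ᵏ⁾‖ ≤ (5! ε M)ᵏ` for `k ≤ 5`. Hence the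
Taylor polynomial `T` of order four of `g` at `0` satisfies `‖g t - T t‖ = O(ε⁵ |t|⁵)`, while
`-T(2P) + 8T(P) - 8T(-P) + T(-2P) = 12P g'(0) = 12Pε F(u)` exactly. Dividing by `12Pε` leaves an
error `O(ε⁴)`.
-/

open Set Metric
open scoped Nat

section IteratedDerivWithin

variable {𝕜 F : Type*} [NontriviallyNormedField 𝕜] [NormedAddCommGroup F] [NormedSpace 𝕜 F]
  {f : 𝕜 → F} {s t : Set 𝕜} {x : 𝕜}

theorem iteratedDerivWithin_subset {n : ℕ} (st : s ⊆ t) (hs : UniqueDiffOn 𝕜 s)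
    (ht : UniqueDiffOn 𝕜 t) (hf : ContDiffOn 𝕜 n f t) (hx : x ∈ s) :
    iteratedDerivWithin n f s x = iteratedDerivWithin n f t x := by
  induction n generalizing x with
  | zero => simp
  | succ n ih =>
    have hdiff : DifferentiableWithinAt 𝕜 (iteratedDerivWithin n f t) t x :=
      hf.differentiableOn_iteratedDerivWithin (mod_cast n.lt_succ_self) ht x (st hx)
    rw [iteratedDerivWithin_succ, iteratedDerivWithin_succ,
      derivWithin_congr (fun y hy => ih hf.of_succ hy) (ih hf.of_succ hx),
      derivWithin_subset st (hs x hx) hdiff]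

end IteratedDerivWithin

section Taylor

variable {E : Type*} [NormedAddCommGroup E] [NormedSpace ℝ E] {f : ℝ → E} {b C x : ℝ} {n : ℕ}

theorem taylor_mean_remainder_bound_centered_of_nonneg (hb : 0 < b)
    (hf : ContDiffOn ℝ (n + 1) f (Icc (-b) b)) (hx : x ∈ Icc 0 b)
    (hC : ∀ y ∈ Icc (-b) b, ‖iteratedDerivWithin (n + 1) f (Icc (-b) b) y‖ ≤ C) :
    ‖f x - ∑ k ∈ Finset.range (n + 1),
        ((k ! : ℝ)⁻¹ * x ^ k) • iteratedDerivWithin k f (Icc (-b) b) 0‖ ≤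
      C * |x| ^ (n + 1) / n ! := by
  have hsub : Icc 0 b ⊆ Icc (-b) b := Icc_subset_Icc_left (by linarith)
  have hs : UniqueDiffOn ℝ (Icc (-b) b) := uniqueDiffOn_Icc (by linarith)
  have hs₀ : UniqueDiffOn ℝ (Icc 0 b) := uniqueDiffOn_Icc hb
  have hrestrict : ∀ k ≤ n + 1, ∀ y ∈ Icc 0 b,
      iteratedDerivWithin k f (Icc 0 b) y = iteratedDerivWithin k f (Icc (-b) b) y :=
    fun k hk y hy => iteratedDerivWithin_subset hsub hs₀ hs (hf.of_le (mod_cast hk)) hy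
  have htaylor := taylor_mean_remainder_bound hb.le (hf.mono hsub) hx fun y hy => by
    rw [hrestrict _ le_rfl y hy]; exact hC y (hsub hy)
  rw [taylor_within_apply] at htaylor
  simp only [sub_zero] at htaylor
  rw [abs_of_nonneg hx.1]
  convert htaylor using 4 with k hk
  rw [hrestrict k (Finset.mem_range.1 hk).le 0 ⟨le_rfl, hb.le⟩]

theorem taylor_mean_remainder_bound_centered (hb : 0 < b)
    (hf : ContDiffOn ℝ (n + 1) f (Icc (-b) b)) (hx : x ∈ Icc (-b) b)
    (hC : ∀ y ∈ Icc (-b) b, ‖iteratedDerivWithin (n + 1) f (Icc (-b) b) y‖ ≤ C) :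
    ‖f x - ∑ k ∈ Finset.range (n + 1),
        ((k ! : ℝ)⁻¹ * x ^ k) • iteratedDerivWithin k f (Icc (-b) b) 0‖ ≤
      C * |x| ^ (n + 1) / n ! := by
  rcases le_total 0 x with hx₀ | hx₀
  · exact taylor_mean_remainder_bound_centered_of_nonneg hb hf ⟨hx₀, hx.2⟩ hC
  have hneg : MapsTo (fun y : ℝ => -y) (Icc (-b) b) (Icc (-b) b) :=
    fun y hy => ⟨neg_le_neg hy.2, by linarith [hy.1]⟩
  have hderiv : ∀ k y, iteratedDerivWithin k (fun y => f (-y)) (Icc (-b) b) y =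
      (-1 : ℝ) ^ k • iteratedDerivWithin k f (Icc (-b) b) (-y) := by
    intro k y
    rw [iteratedDerivWithin_comp_neg, neg_Icc, neg_neg]
  have := taylor_mean_remainder_bound_centered_of_nonneg (f := fun y => f (-y)) hb
    (hf.comp contDiff_neg.contDiffOn hneg)
    ⟨neg_nonneg.2 hx₀, by linarith [hx.1]⟩ fun y hy => by
      rw [hderiv, norm_smul]; simpa using hC (-y) (hneg hy)
  simp only [hderiv, neg_neg, neg_zero, smul_smul, abs_neg] at this
  convert this using 5 with k
  rw [mul_assoc, ← mul_pow, neg_mul_neg, mul_one]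

end Taylor

section AutonomousODE

variable {E : Type*} [NormedAddCommGroup E] [NormedSpace ℝ E] {G : E → E} {f : ℝ → E}
  {s : Set ℝ}

theorem contDiffOn_of_hasDerivWithinAt_comp {n : ℕ} (hG : ContDiff ℝ n G)
    (hs : UniqueDiffOn ℝ s) (hf : ∀ t ∈ s, HasDerivWithinAt f (G (f t)) s t) :
    ContDiffOn ℝ n f s := by
  induction n with
  | zero => exact contDiffOn_zero.2 fun t ht => (hf t ht).continuousWithinAt
  | succ n ih =>
    rw [Nat.cast_succ, contDiffOn_succ_iff_derivWithin hs]
    refine ⟨fun t ht => (hf t ht).differentiableWithinAt, by simp, ?_⟩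
    exact (hG.of_succ.comp_contDiffOn (ih hG.of_succ)).congr fun t ht =>
      (hf t ht).derivWithin (hs t ht)

theorem norm_iteratedDerivWithin_le_of_hasDerivWithinAt_comp {n : ℕ} {C : ℝ}
    (hG : ContDiff ℝ n G) (hs : UniqueDiffOn ℝ s)
    (hf : ∀ t ∈ s, HasDerivWithinAt f (G (f t)) s t)
    (hGC : ∀ t ∈ s, ∀ i < n, ‖iteratedFDeriv ℝ i G (f t)‖ ≤ C)
    {k : ℕ} (hk : 1 ≤ k) (hkn : k ≤ n) {t : ℝ} (ht : t ∈ s) :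
    ‖iteratedDerivWithin k f s t‖ ≤ (n ! * C) ^ k := by
  induction k using Nat.strong_induction_on generalizing t with
  | _ k ih =>
  obtain ⟨k, rfl⟩ : ∃ j, k = j + 1 := ⟨k - 1, by omega⟩
  have hC : 0 ≤ C := (norm_nonneg _).trans (hGC t ht 0 (by omega))
  -- Faà di Bruno, with the lower derivatives of `f` bounded by the induction hypothesis
  have hcomp : ‖iteratedDerivWithin k (G ∘ f) s t‖ ≤ k ! * C * (n ! * C) ^ k := by
    rw [← norm_iteratedFDerivWithin_eq_norm_iteratedDerivWithin]
    refine norm_iteratedFDerivWithin_comp_le hG.contDiffOn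
      (contDiffOn_of_hasDerivWithinAt_comp hG hs hf) (mod_cast (by omega : k ≤ n))
      uniqueDiffOn_univ hs (mapsTo_univ _ _) ht (fun i hi => ?_) (fun i hi₁ hi => ?_)
    · rw [iteratedFDerivWithin_univ]
      exact hGC t ht i (by omega)
    · rw [norm_iteratedFDerivWithin_eq_norm_iteratedDerivWithin]
      exact ih i (by omega) hi₁ (by omega) ht
  calc ‖iteratedDerivWithin (k + 1) f s t‖ = ‖iteratedDerivWithin k (G ∘ f) s t‖ := by
        rw [iteratedDerivWithin_succ',
          iteratedDerivWithin_congr (fun y hy => (hf y hy).derivWithin (hs y hy)) ht]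
        rfl
    _ ≤ k ! * C * (n ! * C) ^ k := hcomp
    _ ≤ n ! * C * (n ! * C) ^ k := by gcongr; omega
    _ = (n ! * C) ^ (k + 1) := by ring

theorem mem_closedBall_of_hasDerivWithinAt_comp_Icc {b C r : ℝ} (hb : 0 < b) (hC : 0 ≤ C)
    (hf : ∀ t ∈ Icc 0 b, HasDerivWithinAt f (G (f t)) (Icc 0 b) t)
    (hG : ∀ v ∈ closedBall (f 0) r, ‖G v‖ ≤ C) (hCb : C * b < r) {t : ℝ} (ht : t ∈ Icc 0 b) :
    f t ∈ closedBall (f 0) r := by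
  have hCr : C < r / b := (lt_div_iff₀ hb).2 hCb
  have hbarrier : ∀ τ ∈ Icc 0 b, r / b * τ ≤ r := fun τ hτ =>
    calc r / b * τ ≤ r / b * b := by gcongr; exacts [hC.trans hCr.le, hτ.2]
      _ = r := div_mul_cancel₀ r hb.ne'
  -- the linear barrier `r / b * τ` grows faster than `f` can move while `f` stays in the ball
  have hdist := image_norm_le_of_norm_deriv_right_lt_deriv_boundary
    (f := fun τ => f τ - f 0) (B := fun τ => r / b * τ) (B' := fun _ => r / b)
    (fun τ hτ => (hf τ hτ).continuousWithinAt.sub continuousWithinAt_const)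
    (fun τ hτ => ((hf τ (Ico_subset_Icc_self hτ)).mono_of_mem_nhdsWithin
      (Icc_mem_nhdsGE_of_mem hτ)).sub_const _)
    (by simp) (fun τ => by simpa using (hasDerivAt_id τ).const_mul (r / b))
    (fun τ hτ heq => (hG _ (by
      rw [mem_closedBall, dist_eq_norm, heq]
      exact hbarrier τ (Ico_subset_Icc_self hτ))).trans_lt hCr) ht
  rw [mem_closedBall, dist_eq_norm]
  exact hdist.trans (hbarrier t ht)

theorem mem_closedBall_of_hasDerivWithinAt_comp_centered {b C r : ℝ} (hb : 0 < b) (hC : 0 ≤ C)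
    (hf : ∀ t ∈ Icc (-b) b, HasDerivWithinAt f (G (f t)) (Icc (-b) b) t)
    (hG : ∀ v ∈ closedBall (f 0) r, ‖G v‖ ≤ C) (hCb : C * b < r) {t : ℝ}
    (ht : t ∈ Icc (-b) b) :
    f t ∈ closedBall (f 0) r := by
  have hsub : Icc 0 b ⊆ Icc (-b) b := Icc_subset_Icc_left (by linarith)
  rcases le_total 0 t with ht₀ | ht₀
  · exact mem_closedBall_of_hasDerivWithinAt_comp_Icc hb hC
      (fun τ hτ => (hf τ (hsub hτ)).mono hsub) hG hCb ⟨ht₀, ht.2⟩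
  have hneg : MapsTo (fun y : ℝ => -y) (Icc 0 b) (Icc (-b) b) :=
    fun y hy => ⟨neg_le_neg hy.2, by linarith [hy.1]⟩
  have := mem_closedBall_of_hasDerivWithinAt_comp_Icc (f := fun τ => f (-τ)) (G := fun v => -G v)
    hb hC (fun τ hτ => by
      simpa [Function.comp_def] using
        (hf (-τ) (hneg hτ)).scomp τ (hasDerivWithinAt_neg τ (Icc 0 b)) hneg)
    (by simpa using hG) hCb ⟨neg_nonneg.2 ht₀, by linarith [ht.1]⟩
  simpa using this

theorem norm_sub_taylor_le_of_hasDerivWithinAt_comp {n : ℕ} {b C r x : ℝ} (hb : 0 < b)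
    (hC : 0 ≤ C) (hG : ContDiff ℝ (n + 1) G)
    (hf : ∀ t ∈ Icc (-b) b, HasDerivWithinAt f (G (f t)) (Icc (-b) b) t)
    (hGC : ∀ v ∈ closedBall (f 0) r, ∀ i < n + 1, ‖iteratedFDeriv ℝ i G v‖ ≤ C)
    (hCb : C * b < r) (hx : x ∈ Icc (-b) b) :
    ‖f x - ∑ k ∈ Finset.range (n + 1),
        ((k ! : ℝ)⁻¹ * x ^ k) • iteratedDerivWithin k f (Icc (-b) b) 0‖ ≤
      ((n + 1)! * C) ^ (n + 1) * |x| ^ (n + 1) / n ! := by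
  have hs : UniqueDiffOn ℝ (Icc (-b) b) := uniqueDiffOn_Icc (by linarith)
  have hball : ∀ t ∈ Icc (-b) b, f t ∈ closedBall (f 0) r := fun t ht =>
    mem_closedBall_of_hasDerivWithinAt_comp_centered hb hC hf
      (fun v hv => by simpa using hGC v hv 0 n.succ_pos) hCb ht
  exact taylor_mean_remainder_bound_centered hb
    (mod_cast contDiffOn_of_hasDerivWithinAt_comp hG hs hf) hx fun y hy =>
      mod_cast norm_iteratedDerivWithin_le_of_hasDerivWithinAt_comp hG hs hf
        (fun t ht => hGC _ (hball t ht)) n.succ_pos le_rfl hy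

end AutonomousODE

section FivePointStencil

variable {E : Type*} [NormedAddCommGroup E] [NormedSpace ℝ E]

theorem norm_fivePointStencil_sub_le {f : ℝ → E} {c : ℕ → E} {h K : ℝ} (hh : 0 < h)
    (hf : ∀ x, |x| ≤ 2 * h →
      ‖f x - ∑ k ∈ Finset.range 5, ((k ! : ℝ)⁻¹ * x ^ k) • c k‖ ≤ K * |x| ^ 5) :
    ‖(1 / (12 * h)) • (-f (2 * h) + (8 : ℝ) • f h - (8 : ℝ) • f (-h) + f (-(2 * h))) - c 1‖ ≤
      20 / 3 * K * h ^ 4 := by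
  set T : ℝ → E := fun x => ∑ k ∈ Finset.range 5, ((k ! : ℝ)⁻¹ * x ^ k) • c k
  set r : ℝ → E := fun x => f x - T x
  -- the stencil weights annihilate `1, x², x³, x⁴` and send `x` to `12 h`
  have hT : -T (2 * h) + (8 : ℝ) • T h - (8 : ℝ) • T (-h) + T (-(2 * h)) = (12 * h) • c 1 := by
    simp only [T, Finset.sum_range_succ, Finset.sum_range_zero]
    norm_num [Nat.factorial]
    module
  have hdecomp : (1 / (12 * h)) • (-f (2 * h) + (8 : ℝ) • f h - (8 : ℝ) • f (-h) + f (-(2 * h)))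
      - c 1 = (1 / (12 * h)) • (-r (2 * h) + (8 : ℝ) • r h - (8 : ℝ) • r (-h) + r (-(2 * h))) := by
    have h12 : (1 / (12 * h)) • (12 * h) • c 1 = c 1 := by
      rw [smul_smul, one_div_mul_cancel (by positivity), one_smul]
    rw [← h12, ← smul_sub, ← hT]
    module
  have hr₁ : ‖r h‖ ≤ K * h ^ 5 := by
    simpa [abs_of_pos hh] using hf h (by rw [abs_of_pos hh]; linarith)
  have hr₂ : ‖r (-h)‖ ≤ K * h ^ 5 := by
    simpa [abs_of_pos hh] using hf (-h) (by rw [abs_neg, abs_of_pos hh]; linarith)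
  have hr₃ : ‖r (2 * h)‖ ≤ K * (2 * h) ^ 5 := by
    simpa [abs_of_pos hh] using hf (2 * h) (by rw [abs_of_pos (by positivity)])
  have hr₄ : ‖r (-(2 * h))‖ ≤ K * (2 * h) ^ 5 := by
    simpa [abs_of_pos hh] using hf (-(2 * h)) (by rw [abs_neg, abs_of_pos (by positivity)])
  rw [hdecomp, norm_smul, Real.norm_of_nonneg (by positivity)]
  calc 1 / (12 * h) * ‖-r (2 * h) + (8 : ℝ) • r h - (8 : ℝ) • r (-h) + r (-(2 * h))‖
      ≤ 1 / (12 * h) * (‖r (2 * h)‖ + 8 * ‖r h‖ + 8 * ‖r (-h)‖ + ‖r (-(2 * h))‖) := by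
        gcongr
        refine (norm_add_le _ _).trans (add_le_add_left ((norm_sub_le _ _).trans
          (add_le_add ((norm_add_le _ _).trans (le_of_eq ?_)) (le_of_eq ?_))) _)
        all_goals simp [norm_smul]
    _ ≤ 1 / (12 * h) * (K * (2 * h) ^ 5 + 8 * (K * h ^ 5) + 8 * (K * h ^ 5)
        + K * (2 * h) ^ 5) := by gcongr
    _ = 20 / 3 * K * h ^ 4 := by field_simp; ring

end FivePointStencil

theorem norm_iteratedFDeriv_le_of_norm_fderiv_le {E : Type*} [NormedAddCommGroup E]
    [NormedSpace ℝ E] {F : E → E} {v : E} {M : ℝ}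
    (h : ‖F v‖ ≤ M ∧ ‖fderiv ℝ F v‖ ≤ M ∧ ‖fderiv ℝ (fderiv ℝ F) v‖ ≤ M ∧
        ‖fderiv ℝ (fderiv ℝ (fderiv ℝ F)) v‖ ≤ M ∧
        @Norm.norm _ ContinuousLinearMap.hasOpNorm
          (fderiv ℝ (fderiv ℝ (fderiv ℝ (fderiv ℝ F))) v) ≤ M) :
    ∀ i < 5, ‖iteratedFDeriv ℝ i F v‖ ≤ M := by
  obtain ⟨h₀, h₁, h₂, h₃, h₄⟩ := h
  intro i hi
  interval_cases i <;> simpa only [← norm_iteratedFDeriv_fderiv, norm_iteratedFDeriv_zero]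

theorem norm_iteratedFDeriv_const_smul_le {E E' : Type*} [NormedAddCommGroup E]
    [NormedSpace ℝ E] [NormedAddCommGroup E'] [NormedSpace ℝ E'] {F : E → E'} {n i : ℕ}
    {c M : ℝ} {v : E} (hF : ContDiff ℝ n F) (hi : i ≤ n) (hc : 0 ≤ c)
    (hM : ‖iteratedFDeriv ℝ i F v‖ ≤ M) :
    ‖iteratedFDeriv ℝ i (c • F) v‖ ≤ c * M := by
  rw [iteratedFDeriv_const_smul_apply (hF.contDiffAt.of_le (mod_cast hi)), norm_smul,
    Real.norm_of_nonneg hc]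
  exact mul_le_mul_of_nonneg_left hM hc

theorem statement_9_general
    {X : Type*} [NormedAddCommGroup X] [NormedSpace ℝ X]
    (F : X → X) (u : X) (P : ℝ) (hP : 0 < P)
    (hF : ContDiff ℝ 5 F)
    (M : ℝ)
    (hbound : ∀ v ∈ Metric.closedBall u 1,
      ‖F v‖ ≤ M ∧ ‖fderiv ℝ F v‖ ≤ M ∧ ‖fderiv ℝ (fderiv ℝ F) v‖ ≤ M ∧
        ‖fderiv ℝ (fderiv ℝ (fderiv ℝ F)) v‖ ≤ M ∧
        @Norm.norm _ ContinuousLinearMap.hasOpNorm (fderiv ℝ (fderiv ℝ (fderiv ℝ (fderiv ℝ F))) v) ≤ M)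
    (ε₀ : ℝ) (hε₀ : 0 < ε₀)
    -- `Ψ ε t u` is the flow of `u' = ε F(u)`, defined for `|t| ≤ 2P` when `0 < ε ≤ ε₀`
    (Ψ : ℝ → ℝ → X → X)
    (hΨ0 : ∀ ε : ℝ, 0 < ε → ε ≤ ε₀ → Ψ ε 0 u = u)
    (hΨ : ∀ ε : ℝ, 0 < ε → ε ≤ ε₀ → ∀ t : ℝ, |t| ≤ 2 * P →
      HasDerivAt (fun s => Ψ ε s u) (ε • F (Ψ ε t u)) t) :
    ∃ C > 0, ∃ ε₁ > 0, ∀ ε : ℝ, 0 < ε → ε ≤ ε₁ →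
      ‖(1 / (12 * P * ε)) •
          (-Ψ ε (2 * P) u + (8 : ℝ) • Ψ ε P u - (8 : ℝ) • Ψ ε (-P) u + Ψ ε (-(2 * P)) u) -
        F u‖ ≤ C * ε ^ 4 := by
  have hM : 0 ≤ M := (norm_nonneg _).trans (hbound u (mem_closedBall_self zero_le_one)).1
  refine ⟨(120 * M) ^ 5 * P ^ 4 + 1, by positivity, min ε₀ (1 / (2 * P * M + 1)),
    lt_min hε₀ (by positivity), fun ε hε hεε₁ => ?_⟩
  have hεε₀ : ε ≤ ε₀ := hεε₁.trans (min_le_left _ _)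
  set g : ℝ → X := fun t => Ψ ε t u
  set s : Set ℝ := Icc (-(2 * P)) (2 * P)
  have hg0 : g 0 = u := hΨ0 ε hε hεε₀
  have hg : ∀ t ∈ s, HasDerivWithinAt g ((ε • F) (g t)) s t := fun t ht =>
    (hΨ ε hε hεε₀ t (abs_le.2 ht)).hasDerivWithinAt
  have hsmall : ε * M * (2 * P) < 1 := by
    have := hεε₁.trans (min_le_right _ _)
    rw [le_div_iff₀ (by positivity)] at this
    nlinarith
  have hεF : ∀ v ∈ closedBall (g 0) 1, ∀ i < 5, ‖iteratedFDeriv ℝ i (ε • F) v‖ ≤ ε * M :=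
    fun v hv i hi => norm_iteratedFDeriv_const_smul_le hF hi.le hε.le
      (norm_iteratedFDeriv_le_of_norm_fderiv_le (hbound v (hg0 ▸ hv)) i hi)
  have htaylor : ∀ x, |x| ≤ 2 * P → ‖g x - ∑ k ∈ Finset.range 5,
      ((k ! : ℝ)⁻¹ * x ^ k) • iteratedDerivWithin k g s 0‖ ≤ (5 ! * (ε * M)) ^ 5 / 4 ! * |x| ^ 5 :=
    fun x hx => (norm_sub_taylor_le_of_hasDerivWithinAt_comp (by positivity) (by positivity)
      (hF.const_smul ε) hg hεF hsmall (abs_le.1 hx)).trans_eq (by ring)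
  have hc1 : iteratedDerivWithin 1 g s 0 = ε • F u := by
    have h0 : (0 : ℝ) ∈ s := ⟨by linarith, by linarith⟩
    rw [iteratedDerivWithin_one, (hg 0 h0).derivWithin (uniqueDiffOn_Icc (by linarith) 0 h0), hg0]
    rfl
  have hstencil := norm_fivePointStencil_sub_le hP htaylor
  rw [hc1] at hstencil
  have hrescale : ∀ D : X,
      (1 / (12 * P * ε)) • D - F u = ε⁻¹ • ((1 / (12 * P)) • D - ε • F u) := by
    intro D
    rw [smul_sub, smul_smul, smul_smul, inv_mul_cancel₀ hε.ne', one_smul]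
    congr 2
    field_simp
  rw [hrescale, norm_smul, Real.norm_of_nonneg (inv_nonneg.2 hε.le)]
  calc ε⁻¹ * ‖_‖ ≤ ε⁻¹ * (20 / 3 * ((5 ! * (ε * M)) ^ 5 / 4 !) * P ^ 4) := by gcongr
    _ = 5 / 18 * ((120 * M) ^ 5 * P ^ 4) * ε ^ 4 := by
      norm_num [Nat.factorial]
      field_simp
      ring
    _ ≤ ((120 * M) ^ 5 * P ^ 4 + 1) * ε ^ 4 := by
      gcongr
      linarith [show 0 ≤ (120 * M) ^ 5 * P ^ 4 by positivity]

/-- the fourth-order finite difference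
`(-Ψ(2P,u) + 8Ψ(P,u) - 8Ψ(-P,u) + Ψ(-2P,u))/(12Pε)` of the flow of `u' = ε F(u)`
approximates `F(u)` with error `O(ε⁴)`, for `F` of class `C⁵` with bounded
derivatives near `u`; the flow exists for `|t| ≤ 2P` for small `ε`. -/
theorem statement_9
    {X : Type*} [NormedAddCommGroup X] [NormedSpace ℝ X] [CompleteSpace X]
    (F : X → X) (u : X) (P : ℝ) (hP : 0 < P)
    (hF : ContDiff ℝ 5 F)
    (M : ℝ)
    (hbound : ∀ v ∈ Metric.closedBall u 1,
      ‖F v‖ ≤ M ∧ ‖fderiv ℝ F v‖ ≤ M ∧ ‖fderiv ℝ (fderiv ℝ F) v‖ ≤ M ∧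
        ‖fderiv ℝ (fderiv ℝ (fderiv ℝ F)) v‖ ≤ M ∧
        @Norm.norm _ ContinuousLinearMap.hasOpNorm (fderiv ℝ (fderiv ℝ (fderiv ℝ (fderiv ℝ F))) v) ≤ M)
    (ε₀ : ℝ) (hε₀ : 0 < ε₀)
    -- `Ψ ε t u` is the flow of `u' = ε F(u)`, defined for `|t| ≤ 2P` when `0 < ε ≤ ε₀`
    (Ψ : ℝ → ℝ → X → X)
    (hΨ0 : ∀ ε : ℝ, 0 < ε → ε ≤ ε₀ → Ψ ε 0 u = u)
    (hΨ : ∀ ε : ℝ, 0 < ε → ε ≤ ε₀ → ∀ t : ℝ, |t| ≤ 2 * P →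
      HasDerivAt (fun s => Ψ ε s u) (ε • F (Ψ ε t u)) t) :
    ∃ C > 0, ∃ ε₁ > 0, ∀ ε : ℝ, 0 < ε → ε ≤ ε₁ →
      ‖(1 / (12 * P * ε)) •
          (-Ψ ε (2 * P) u + (8 : ℝ) • Ψ ε P u - (8 : ℝ) • Ψ ε (-P) u + Ψ ε (-(2 * P)) u) -
        F u‖ ≤ C * ε ^ 4 :=
  statement_9_general F u P hP hF M hbound ε₀ hε₀ Ψ hΨ0 hΨ
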